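/- For the k-price auction with 2 ≤ k ≤ n+1, there exists a pure-strategy Nash equilibrium in which agent i wins and pays p if and only if v_i > v_{n−(k−3)} and v_{n−(k−3)} ≤ p ≤ v_i (with v_{n+1} := 0; for k = n+1 the condition reads i = 1 and v_2 ≤ p ≤ v_1). -/

import Mathlib

open Classical

/-- The k-th highest bid (k counted from 1). -/
noncomputable def kthHighest {n : ℕ} (b : Fin n → ℝ) (k : ℕ) : ℝ :=
  ((List.ofFn b).mergeSort (fun x y => decide (y ≤ x))).getD (k - 1) 0

/-- Agent `i` wins: her bid is highest, with ties broken toward the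
agent with the highest valuation, i.e. (for strictly decreasing valuations)
the lowest index among the maximal bidders. -/
def wins {n : ℕ} (b : Fin n → ℝ) (i : Fin n) : Prop :=
  (∀ j, b j ≤ b i) ∧ ∀ j, b j = b i → i ≤ j

/-- The price paid by the winner in the k-price auction (2 ≤ k ≤ n), or in the
first-price auction (the case k = n+1), where the winner pays the highest bid. -/
noncomputable def price {n : ℕ} (k : ℕ) (b : Fin n → ℝ) : ℝ :=
  if k = n + 1 then kthHighest b 1 else kthHighest b k

/-- The winner gets her valuation minus the price; losers get 0. -/
noncomputable def utility {n : ℕ} (v : Fin n → ℝ) (k : ℕ) (b : Fin n → ℝ)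
    (i : Fin n) : ℝ :=
  if wins b i then v i - price k b else 0

/-- Pure-strategy Nash equilibrium with nonnegative bids: no agent can strictly
improve her utility by a unilateral deviation to another nonnegative bid. -/
def NashEq {n : ℕ} (v : Fin n → ℝ) (k : ℕ) (b : Fin n → ℝ) : Prop :=
  (∀ i, 0 ≤ b i) ∧
  ∀ i : Fin n, ∀ b' : ℝ, 0 ≤ b' →
    utility v k (Function.update b i b') i ≤ utility v k b i

/-- One-based valuation indexing, with the convention `v_{n+1} = 0`. -/
noncomputable def vIdx {n : ℕ} (v : Fin n → ℝ) (j : ℕ) : ℝ :=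
  if h : 1 ≤ j ∧ j ≤ n then v ⟨j - 1, by omega⟩ else 0

/-!
Let `q` be the price paid by the winner `i`, and let `j` be a loser with `q < v j`; she can win by
outbidding everybody. In the first-price auction she could then pay less than `v j`, so there is
no such loser. In the `k`-price auction she would pay `q` if `q < b j`, and at most the
`(k-1)`-th highest bid `r` in any case, so `b j ≤ q` and `v j ≤ r`; as at least `k - 1` bids are
`≥ r > q`, there are at most `n + 1 - k` such losers. Since `v` is decreasing and `q ≤ v i`, this
bound says exactly `v_{n+3-k} ≤ q` and `v_{n+3-k} < v i`.

Conversely, in the first-price auction the two agents of highest value bid `p`. In the `k`-price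
auction `i` and the `k - 2` agents of lowest value bid some `B` above every value, one more agent
bids `p` and the others bid `0`. The price is then `p`, every winning deviation costs at least `p`,
which covers the values of the `k - 2` low agents, and any other loser pays at least `B` to win.
-/

open Finset

namespace List

variable {α : Type*} [LinearOrder α] {s : List α}

theorem Pairwise.succ_le_countP_getElem_le (hs : s.Pairwise (· ≥ ·)) {m : ℕ}
    (hm : m < s.length) : m + 1 ≤ s.countP (fun y => s[m] ≤ y) := by
  obtain ⟨x, hx⟩ : ∃ x, s[m] = x := ⟨_, rfl⟩
  have hsplit := take_append_drop m s
  rw [drop_eq_getElem_cons hm, hx] at hsplit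
  rw [hx]
  have hhead : ∀ a ∈ s.take m, x ≤ a := by
    rw [← hsplit, pairwise_append] at hs
    exact fun a ha => hs.2.2 a ha _ mem_cons_self
  have htake : (s.take m).countP (fun y => x ≤ y) = m := by
    rw [countP_eq_length.mpr (by simpa using hhead), length_take, min_eq_left hm.le]
  conv_rhs => rw [← hsplit]
  rw [countP_append, htake, countP_cons]
  simp

theorem Pairwise.countP_getElem_lt_le (hs : s.Pairwise (· ≥ ·)) {m : ℕ}
    (hm : m < s.length) : s.countP (fun y => s[m] < y) ≤ m := by
  obtain ⟨x, hx⟩ : ∃ x, s[m] = x := ⟨_, rfl⟩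
  have hsplit := take_append_drop m s
  rw [drop_eq_getElem_cons hm, hx] at hsplit
  rw [hx]
  have htail : ∀ a ∈ s.drop (m + 1), a ≤ x := by
    rw [← hsplit, pairwise_append, pairwise_cons] at hs
    exact hs.2.1.1
  have hdrop : (s.drop (m + 1)).countP (fun y => x < y) = 0 :=
    countP_eq_zero.mpr fun a ha => by simpa using htail a ha
  conv_lhs => rw [← hsplit]
  rw [countP_append, countP_cons, hdrop]
  simpa using (countP_le_length).trans (length_take_le m s)

end List

theorem List.countP_ofFn {α : Type*} {n : ℕ} (b : Fin n → α) (P : α → Prop)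
    [DecidablePred P] :
    (List.ofFn b).countP (fun y => decide (P y)) = #{j | P (b j)} := by
  rw [← Multiset.coe_countP, ← Fin.univ_val_map, Multiset.countP_map]
  rfl

namespace Fin

theorem card_filter_le_val {n m : ℕ} : #{i : Fin n | m ≤ (i : ℕ)} = n - m := by
  have h := card_filter_add_card_filter_not (s := (univ : Finset (Fin n)))
    (p := fun i => (i : ℕ) < m)
  simp only [not_lt, card_filter_val_lt, card_univ, Fintype.card_fin] at h
  omega

theorem exists_ne_val_lt {n t : ℕ} (ht : 2 ≤ t) (htn : t ≤ n) (d : Fin n) :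
    ∃ l : Fin n, l ≠ d ∧ (l : ℕ) < t := by
  by_cases hd : (d : ℕ) = 0
  · exact ⟨⟨1, by omega⟩, fun h => by simp [← h] at hd, by simp only; omega⟩
  · exact ⟨⟨0, by omega⟩, fun h => hd (by simp [← h]), by simp only; omega⟩

end Fin

section KthHighest

variable {n : ℕ} (b : Fin n → ℝ) {k : ℕ}

theorem exists_sorted_kthHighest_eq_getElem (hk1 : 1 ≤ k) (hkn : k ≤ n) :
    ∃ s : List ℝ, s.Pairwise (· ≥ ·) ∧ s.Perm (List.ofFn b) ∧
      ∃ h : k - 1 < s.length, kthHighest b k = s[k - 1] := by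
  have hperm := List.mergeSort_perm (List.ofFn b) (fun x y => decide (y ≤ x))
  have hlen : k - 1 < ((List.ofFn b).mergeSort (fun x y => decide (y ≤ x))).length := by
    rw [hperm.length_eq, List.length_ofFn]; omega
  refine ⟨_, ?_, hperm, hlen, List.getD_eq_getElem _ _ hlen⟩
  simpa using List.pairwise_mergeSort (le := fun x y : ℝ => decide (y ≤ x))
    (fun a b c h1 h2 => by simp only [decide_eq_true_eq] at *; linarith)
    (fun a b => by simp [le_total b a]) (List.ofFn b)

theorem le_card_filter_kthHighest_le (hk1 : 1 ≤ k) (hkn : k ≤ n) :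
    k ≤ #{j | kthHighest b k ≤ b j} := by
  obtain ⟨s, hs, hperm, hlen, hkth⟩ := exists_sorted_kthHighest_eq_getElem b hk1 hkn
  rw [← List.countP_ofFn, ← hperm.countP_eq, hkth]
  have := hs.succ_le_countP_getElem_le hlen
  omega

theorem card_filter_kthHighest_lt_le (hk1 : 1 ≤ k) (hkn : k ≤ n) :
    #{j | kthHighest b k < b j} ≤ k - 1 := by
  obtain ⟨s, hs, hperm, hlen, hkth⟩ := exists_sorted_kthHighest_eq_getElem b hk1 hkn
  rw [← List.countP_ofFn, ← hperm.countP_eq, hkth]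
  exact hs.countP_getElem_lt_le hlen

theorem le_kthHighest_of_le_card (hk1 : 1 ≤ k) (hkn : k ≤ n) {y : ℝ}
    (hy : k ≤ #{j | y ≤ b j}) : y ≤ kthHighest b k := by
  by_contra! hlt
  have : #{j | y ≤ b j} ≤ #{j | kthHighest b k < b j} :=
    card_le_card fun j hj => by simp only [mem_filter_univ] at hj ⊢; linarith
  have := card_filter_kthHighest_lt_le b hk1 hkn
  omega

theorem kthHighest_le_of_card_le (hk1 : 1 ≤ k) (hkn : k ≤ n) {y : ℝ}
    (hy : #{j | y < b j} ≤ k - 1) : kthHighest b k ≤ y := by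
  by_contra! hlt
  have : #{j | kthHighest b k ≤ b j} ≤ #{j | y < b j} :=
    card_le_card fun j hj => by simp only [mem_filter_univ] at hj ⊢; linarith
  have := le_card_filter_kthHighest_le b hk1 hkn
  omega

theorem kthHighest_nonneg (hb : ∀ j, 0 ≤ b j) (k : ℕ) : 0 ≤ kthHighest b k := by
  unfold kthHighest
  rw [List.getD_eq_getElem?_getD]
  cases h : ((List.ofFn b).mergeSort (fun x y => decide (y ≤ x)))[k - 1]? with
  | none => exact le_rfl
  | some x =>
    obtain ⟨j, rfl⟩ :=
      List.mem_ofFn.mp ((List.mergeSort_perm _ _).mem_iff.mp (List.mem_of_getElem? h))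
    exact hb j

theorem kthHighest_update_le_of_lt (hk1 : 1 ≤ k) (hkn : k ≤ n) {j : Fin n}
    (hj : kthHighest b k < b j) (x : ℝ) :
    kthHighest (Function.update b j x) k ≤ kthHighest b k := by
  refine kthHighest_le_of_card_le _ hk1 hkn ((card_le_card fun l hl => ?_).trans
    (card_filter_kthHighest_lt_le b hk1 hkn))
  simp only [mem_filter_univ] at hl ⊢
  rcases eq_or_ne l j with rfl | hlj
  · exact hj
  · rwa [Function.update_of_ne hlj] at hl

theorem kthHighest_update_le (hk2 : 2 ≤ k) (hkn : k ≤ n) (j : Fin n) (x : ℝ) :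
    kthHighest (Function.update b j x) k ≤ kthHighest b (k - 1) := by
  have hr := card_filter_kthHighest_lt_le b (k := k - 1) (by omega) (by omega)
  set r := kthHighest b (k - 1)
  have hsub : ({l | r < Function.update b j x l} : Finset (Fin n)) ⊆
      insert j ({l | r < b l} : Finset (Fin n)) := by
    intro l hl
    simp only [mem_filter_univ, mem_insert] at hl ⊢
    rcases eq_or_ne l j with rfl | hlj
    · exact Or.inl rfl
    · rw [Function.update_of_ne hlj] at hl
      exact Or.inr hl
  refine kthHighest_le_of_card_le _ (by omega) hkn ?_
  have := (card_le_card hsub).trans (card_insert_le _ _)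
  omega

end KthHighest

section Valuations

variable {n : ℕ} {v : Fin n → ℝ} {i : Fin n} {q : ℝ} {c : ℕ}

theorem vIdx_succ_of_lt (v : Fin n → ℝ) {t : ℕ} (ht : t < n) :
    vIdx v (t + 1) = v ⟨t, ht⟩ := by
  simp [vIdx, Nat.succ_le_of_lt ht]

theorem vIdx_succ_of_le (v : Fin n → ℝ) {t : ℕ} (ht : n ≤ t) : vIdx v (t + 1) = 0 := by
  rw [vIdx, dif_neg (by omega)]

theorem vIdx_nonneg (hv : ∀ j, 0 ≤ v j) (t : ℕ) : 0 ≤ vIdx v t := by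
  unfold vIdx
  split_ifs
  exacts [hv _, le_rfl]

theorem StrictAnti.val_le_of_card_filter_lt_le (hv : StrictAnti v) (hqv : q ≤ v i)
    (hc : #{j | j ≠ i ∧ q < v j} ≤ c) : (i : ℕ) ≤ c := by
  have hsub : Iio i ⊆ ({j | j ≠ i ∧ q < v j} : Finset (Fin n)) := fun j hj => by
    rw [mem_Iio] at hj
    simpa [hj.ne] using hqv.trans_lt (hv hj)
  have := card_le_card hsub
  rw [Fin.card_Iio] at this
  omega

theorem StrictAnti.le_of_card_filter_lt_le (hv : StrictAnti v)
    (hc : #{j | j ≠ i ∧ q < v j} ≤ c) {a : Fin n} (ha : c < (a : ℕ)) : v a ≤ q := by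
  by_contra! hlt
  have hsub : (Iic a).erase i ⊆ ({j | j ≠ i ∧ q < v j} : Finset (Fin n)) := fun j hj => by
    obtain ⟨hji, hja⟩ := mem_erase.mp hj
    simpa [hji] using hlt.trans_le (hv.antitone (mem_Iic.mp hja))
  have := card_le_card hsub
  have := pred_card_le_card_erase (s := Iic a) (a := i)
  rw [Fin.card_Iic] at this
  omega

theorem StrictAnti.vIdx_lt_and_le_of_card_filter_lt_le (hv : StrictAnti v)
    (hvpos : ∀ j, 0 < v j) (hq0 : 0 ≤ q) (hqv : q ≤ v i)
    (hc : #{j | j ≠ i ∧ q < v j} ≤ c) : vIdx v (c + 2) < v i ∧ vIdx v (c + 2) ≤ q := by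
  rcases lt_or_ge (c + 1) n with h | h
  · rw [vIdx_succ_of_lt v h]
    have hi := hv.val_le_of_card_filter_lt_le hqv hc
    exact ⟨hv (Fin.lt_def.mpr (by show (i : ℕ) < c + 1; omega)),
      hv.le_of_card_filter_lt_le hc (by show c < c + 1; omega)⟩
  · rw [vIdx_succ_of_le v h]
    exact ⟨hvpos i, hq0⟩

theorem StrictAnti.val_lt_of_vIdx_lt (hv : StrictAnti v) {t : ℕ} (h : vIdx v (t + 1) < v i) :
    (i : ℕ) < t := by
  rcases lt_or_ge t n with ht | ht
  · rw [vIdx_succ_of_lt v ht] at h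
    exact Fin.lt_def.mp (hv.lt_iff_gt.mp h)
  · omega

theorem StrictAnti.le_vIdx_of_le (hv : StrictAnti v) {t : ℕ} {j : Fin n} (hj : t ≤ j) :
    v j ≤ vIdx v (t + 1) := by
  rw [vIdx_succ_of_lt v (by omega)]
  exact hv.antitone (Fin.le_def.mpr hj)

end Valuations

section Auction

variable {n k : ℕ} {v b : Fin n → ℝ} {i j : Fin n} {p : ℝ}

theorem wins.unique (hi : wins b i) (hj : wins b j) : i = j :=
  le_antisymm (hi.2 j (le_antisymm (hi.1 j) (hj.1 i))) (hj.2 i (le_antisymm (hj.1 i) (hi.1 j)))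

theorem wins.card_filter_lt_eq_zero (hi : wins b i) : #{j | b i < b j} = 0 :=
  card_eq_zero.mpr (filter_eq_empty_iff.mpr fun j _ => not_lt.mpr (hi.1 j))

theorem wins_update_of_lt (hi : wins b i) {x : ℝ} (hx : b i < x) (j : Fin n) :
    wins (Function.update b j x) j := by
  have hlt : ∀ l ≠ j, Function.update b j x l < x := fun l hl => by
    rw [Function.update_of_ne hl]; exact (hi.1 l).trans_lt hx
  refine ⟨fun l => ?_, fun l hl => ?_⟩
  · rcases eq_or_ne l j with rfl | hlj
    · rfl
    · rw [Function.update_self]; exact (hlt l hlj).le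
  · by_contra hjl
    rw [Function.update_self] at hl
    exact (hlt l (not_le.mp hjl).ne).ne hl

theorem kthHighest_one_eq_of_wins (hi : wins b i) : kthHighest b 1 = b i := by
  have hn : 1 ≤ n := i.pos
  exact le_antisymm (kthHighest_le_of_card_le b le_rfl hn hi.card_filter_lt_eq_zero.le)
    (le_kthHighest_of_le_card b le_rfl hn (card_pos.mpr ⟨i, by simp⟩))

theorem le_kthHighest_update_of_wins (hk2 : 2 ≤ k) (hkn : k ≤ n) {S : Finset (Fin n)}
    (hS : k ≤ #S) {y : ℝ} {d : Fin n} (hyS : ∀ j ∈ S, j ≠ d → y ≤ b j) {x : ℝ}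
    (hd : wins (Function.update b d x) d) : y ≤ kthHighest (Function.update b d x) k := by
  refine le_kthHighest_of_le_card _ (by omega) hkn (hS.trans (card_le_card fun j hj => ?_))
  rw [mem_filter_univ]
  rcases eq_or_ne j d with rfl | hjd
  · obtain ⟨l, hl, hlj⟩ := exists_mem_ne (s := S) (by omega) j
    have := hd.1 l
    rw [Function.update_of_ne hlj] at this
    exact (hyS l hl hlj).trans this
  · rw [Function.update_of_ne hjd]
    exact hyS j hj hjd

theorem price_eq_kthHighest (hkn : k ≤ n) (b : Fin n → ℝ) : price k b = kthHighest b k := by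
  rw [price, if_neg (by omega)]

theorem price_eq_bid_of_wins (hk : k = n + 1) (hi : wins b i) : price k b = b i := by
  rw [price, if_pos hk, kthHighest_one_eq_of_wins hi]

theorem price_le_of_wins (hk1 : 1 ≤ k) (hk : k ≤ n + 1) (hi : wins b i) :
    price k b ≤ b i := by
  rcases eq_or_lt_of_le hk with hk | hk
  · exact (price_eq_bid_of_wins hk hi).le
  rw [price_eq_kthHighest (by omega)]
  exact kthHighest_le_of_card_le b hk1 (by omega) (hi.card_filter_lt_eq_zero ▸ Nat.zero_le _)

theorem price_nonneg (hb : ∀ j, 0 ≤ b j) : 0 ≤ price k b := by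
  unfold price
  split_ifs <;> exact kthHighest_nonneg b hb _

theorem utility_of_wins (hi : wins b i) : utility v k b i = v i - price k b :=
  if_pos hi

theorem utility_eq_zero_of_ne (hi : wins b i) (hj : j ≠ i) : utility v k b j = 0 :=
  if_neg fun hw => hj (hw.unique hi)

namespace NashEq

theorem price_le_value_of_wins (hne : NashEq v k b) (hk1 : 1 ≤ k) (hk : k ≤ n + 1)
    (hvi : 0 ≤ v i) (hi : wins b i) : price k b ≤ v i := by
  have hdev := hne.2 i 0 le_rfl
  rw [utility_of_wins hi] at hdev
  -- bidding `0`, agent `i` either loses or still wins and pays at most `0`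
  have : 0 ≤ utility v k (Function.update b i 0) i := by
    unfold utility
    split_ifs with hw
    · have := price_le_of_wins hk1 hk hw
      rw [Function.update_self] at this
      linarith
    · rfl
  linarith

theorem value_le_price_update (hne : NashEq v k b) (hi : wins b i) (hj : j ≠ i) {x : ℝ}
    (hx : 0 ≤ x) (hw : wins (Function.update b j x) j) :
    v j ≤ price k (Function.update b j x) := by
  have := hne.2 j x hx
  rw [utility_eq_zero_of_ne hi hj, utility, if_pos hw] at this
  linarith

theorem value_le_price_of_first_price (hne : NashEq v (n + 1) b) (hi : wins b i) (hj : j ≠ i) :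
    v j ≤ price (n + 1) b := by
  rw [price_eq_bid_of_wins rfl hi]
  by_contra! hlt
  have hw := wins_update_of_lt hi (x := (b i + v j) / 2) (by linarith) j
  have := hne.value_le_price_update hi hj (by linarith [hne.1 i]) hw
  rw [price_eq_bid_of_wins rfl hw, Function.update_self] at this
  linarith

theorem card_filter_price_lt_value_le_of_le (hne : NashEq v k b) (hk2 : 2 ≤ k) (hkn : k ≤ n)
    (hi : wins b i) : #{j | j ≠ i ∧ price k b < v j} ≤ n + 1 - k := by
  have hR := le_card_filter_kthHighest_le b (k := k - 1) (by omega) (by omega)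
  rw [price_eq_kthHighest hkn]
  set q := kthHighest b k
  set r := kthHighest b (k - 1)
  set L : Finset (Fin n) := {j | j ≠ i ∧ q < v j}
  -- `j` may outbid everybody, and would then pay at most `q` if `q < b j`, and at most `r` anyway
  have hL : ∀ j ∈ L, b j ≤ q ∧ v j ≤ r := by
    intro j hj
    obtain ⟨hji, -⟩ := (mem_filter_univ j).mp hj
    have hw := wins_update_of_lt hi (lt_add_one (b i)) j
    have hdev := hne.value_le_price_update hi hji (by linarith [hne.1 i]) hw
    rw [price_eq_kthHighest hkn] at hdev
    refine ⟨?_, hdev.trans (kthHighest_update_le b hk2 hkn j _)⟩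
    by_contra! hbj
    have := kthHighest_update_le_of_lt b (by omega) hkn hbj (b i + 1)
    linarith [((mem_filter_univ j).mp hj).2]
  by_contra! hcard
  obtain ⟨j, hj⟩ : L.Nonempty := card_pos.mp (by omega)
  have hqr : q < r := ((mem_filter_univ j).mp hj).2.trans_le (hL j hj).2
  have hdisj : Disjoint L ({j | r ≤ b j} : Finset (Fin n)) :=
    disjoint_left.mpr fun l hlL hlR => by linarith [(hL l hlL).1, (mem_filter_univ l).mp hlR]
  have := card_union_of_disjoint hdisj ▸ card_le_univ (L ∪ ({j | r ≤ b j} : Finset (Fin n)))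
  rw [Fintype.card_fin] at this
  omega

theorem card_filter_price_lt_value_le (hne : NashEq v k b) (hk2 : 2 ≤ k) (hk : k ≤ n + 1)
    (hi : wins b i) : #{j | j ≠ i ∧ price k b < v j} ≤ n + 1 - k := by
  rcases eq_or_lt_of_le hk with rfl | hk
  · rw [card_eq_zero.mpr (filter_eq_empty_iff.mpr fun j _ h =>
      (hne.value_le_price_of_first_price hi h.1).not_gt h.2)]
    exact Nat.zero_le _
  · exact hne.card_filter_price_lt_value_le_of_le hk2 (by omega) hi

end NashEq

theorem nashEq_of_forall_wins_update (hb : ∀ j, 0 ≤ b j) (hi : wins b i)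
    (hpv : price k b ≤ v i)
    (hwinner : ∀ x, 0 ≤ x → wins (Function.update b i x) i →
      price k b ≤ price k (Function.update b i x))
    (hloser : ∀ j ≠ i, ∀ x, 0 ≤ x → wins (Function.update b j x) j →
      v j ≤ price k (Function.update b j x)) :
    NashEq v k b := by
  refine ⟨hb, fun j x hx => ?_⟩
  rcases eq_or_ne j i with rfl | hji
  · rw [utility_of_wins hi, utility]
    split_ifs with hw
    · linarith [hwinner x hx hw]
    · linarith
  · rw [utility_eq_zero_of_ne hi hji, utility]
    split_ifs with hw
    · linarith [hloser j hji x hx hw]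
    · rfl

theorem exists_nashEq_wins_price_first_price (hn : 2 ≤ n) (hi : (i : ℕ) < 1) (hp0 : 0 ≤ p)
    (hpv : p ≤ v i) (hvp : ∀ j : Fin n, 1 ≤ (j : ℕ) → v j ≤ p) :
    ∃ b, NashEq v (n + 1) b ∧ wins b i ∧ price (n + 1) b = p := by
  set b : Fin n → ℝ := fun j => if (j : ℕ) < 2 then p else 0
  have hbi : b i = p := if_pos (by omega)
  have hwin : wins b i := ⟨fun j => by simp only [b]; split_ifs <;> linarith,
    fun j _ => Fin.le_def.mpr (by omega)⟩
  have hprice : price (n + 1) b = p := by rw [price_eq_bid_of_wins rfl hwin, hbi]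
  have hdev : ∀ d x, wins (Function.update b d x) d →
      p ≤ price (n + 1) (Function.update b d x) := by
    intro d x hw
    obtain ⟨l, hld, hl⟩ := Fin.exists_ne_val_lt le_rfl hn d
    have := hw.1 l
    rw [Function.update_of_ne hld, Function.update_self] at this
    rwa [price_eq_bid_of_wins rfl hw, Function.update_self, ← show b l = p from if_pos hl]
  refine ⟨b, nashEq_of_forall_wins_update (fun j => ?_) hwin (hprice ▸ hpv)
    (fun x _ hw => hprice ▸ hdev i x hw)
    (fun j hji x _ hw => (hvp j ?_).trans (hdev j x hw)), hwin, hprice⟩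
  · simp only [b]; split_ifs <;> linarith
  · exact Nat.one_le_iff_ne_zero.mpr fun h => hji (Fin.ext (by omega))

theorem nashEq_and_price_eq_of_top_bids (hk2 : 2 ≤ k) (hkn : k ≤ n) {T : Finset (Fin n)}
    (hT : #T = k - 1) {B : ℝ} (hbT : ∀ j ∈ T, b j = B) {j₀ : Fin n} (hj₀ : j₀ ∉ T)
    (hbj₀ : b j₀ = p) (hbp : ∀ j ∉ T, b j ≤ p) (hb : ∀ j, 0 ≤ b j) (hiT : i ∈ T)
    (hi : wins b i) (hpv : p ≤ v i) (hvT : ∀ j ∈ T, j ≠ i → v j ≤ p)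
    (hvB : ∀ j ∉ T, v j ≤ B) :
    NashEq v k b ∧ price k b = p := by
  have hpB : p ≤ B := hbj₀ ▸ hbT i hiT ▸ hi.1 j₀
  have hprice : ∀ d x, wins (Function.update b d x) d →
      p ≤ price k (Function.update b d x) := by
    refine fun d x hw => price_eq_kthHighest hkn _ ▸ le_kthHighest_update_of_wins hk2 hkn
      (S := insert j₀ T) (by rw [card_insert_of_notMem hj₀]; omega) (fun j hj _ => ?_) hw
    rcases mem_insert.mp hj with rfl | hj
    · exact hbj₀.ge
    · exact hbT j hj ▸ hpB
  have hpb : price k b = p := by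
    refine le_antisymm ?_ (Function.update_eq_self i b ▸ hprice i (b i) (by simpa using hi))
    rw [price_eq_kthHighest hkn]
    refine kthHighest_le_of_card_le b (by omega) hkn ((card_le_card fun j hj => ?_).trans hT.le)
    by_contra hjT
    linarith [hbp j hjT, (mem_filter_univ j).mp hj]
  refine ⟨nashEq_of_forall_wins_update hb hi (hpb ▸ hpv) (fun x _ hw => hpb ▸ hprice i x hw)
    (fun d hdi x _ hw => ?_), hpb⟩
  by_cases hdT : d ∈ T
  · exact (hvT d hdT hdi).trans (hprice d x hw)
  -- the `k - 1` bids `B` of `T` and the winning bid are `k` bids at least `B`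
  exact (hvB d hdT).trans (price_eq_kthHighest hkn _ ▸ le_kthHighest_update_of_wins hk2 hkn
    (S := insert d T) (by rw [card_insert_of_notMem hdT]; omega)
    (fun j hj hjd => (hbT j ((mem_insert.mp hj).resolve_left hjd)).ge) hw)

theorem exists_nashEq_wins_price_of_le (hk2 : 2 ≤ k) (hkn : k ≤ n) (hi : (i : ℕ) < n + 2 - k)
    (hp0 : 0 ≤ p) (hpv : p ≤ v i) (hvp : ∀ j : Fin n, n + 2 - k ≤ (j : ℕ) → v j ≤ p) :
    ∃ b, NashEq v k b ∧ wins b i ∧ price k b = p := by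
  set t := n + 2 - k
  obtain ⟨M, hM⟩ := (Set.finite_range v).bddAbove
  set B := max M p + 1
  have hpB : p < B := by linarith [le_max_right M p]
  set T : Finset (Fin n) := insert i ({j | t ≤ (j : ℕ)} : Finset (Fin n))
  have hmemT : ∀ j, j ∈ T ↔ j = i ∨ t ≤ (j : ℕ) := by simp [T]
  have hT : #T = k - 1 := by
    rw [card_insert_of_notMem (by rw [mem_filter_univ]; omega), Fin.card_filter_le_val]
    omega
  obtain ⟨j₀, hj₀i, hj₀t⟩ := Fin.exists_ne_val_lt (t := t) (by omega) (by omega) i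
  have hj₀ : j₀ ∉ T := by rw [hmemT]; omega
  set b : Fin n → ℝ := fun j => if j ∈ T then B else if j = j₀ then p else 0
  have hbT : ∀ j ∈ T, b j = B := fun j hj => if_pos hj
  have hbp : ∀ j ∉ T, b j ≤ p := fun j hj => by
    simp only [b, if_neg hj]
    split_ifs <;> linarith
  have hwin : wins b i := by
    have hiT : i ∈ T := mem_insert_self i _
    refine ⟨fun j => ?_, fun j hj => ?_⟩
    · by_cases hj : j ∈ T
      · rw [hbT j hj, hbT i hiT]
      · linarith [hbp j hj, hbT i hiT]
    · by_contra! hji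
      have hj : j ∉ T := by rw [hmemT]; omega
      linarith [hbp j hj, hbT i hiT]
  have hb : ∀ j, 0 ≤ b j := fun j => by
    simp only [b]
    split_ifs <;> linarith
  have hvT : ∀ j ∈ T, j ≠ i → v j ≤ p := fun j hj hji =>
    hvp j (((hmemT j).mp hj).resolve_left hji)
  have hvB : ∀ j ∉ T, v j ≤ B := fun j _ =>
    (hM (Set.mem_range_self j)).trans (by linarith [le_max_left M p])
  obtain ⟨hne, hprice⟩ := nashEq_and_price_eq_of_top_bids hk2 hkn hT hbT hj₀
    (by simp [b, hj₀]) hbp hb (mem_insert_self i _) hwin hpv hvT hvB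
  exact ⟨b, hne, hwin, hprice⟩

end Auction

theorem stmt10 {n : ℕ} (hn : 2 ≤ n) (v : Fin n → ℝ) (hv : StrictAnti v) (hvpos : ∀ i, 0 < v i) (k : ℕ) (hk2 : 2 ≤ k) (hkn : k ≤ n + 1)
    (i : Fin n) (p : ℝ) :
    (∃ b : Fin n → ℝ, NashEq v k b ∧ wins b i ∧ price k b = p) ↔
    (vIdx v (n + 3 - k) < v i ∧ vIdx v (n + 3 - k) ≤ p ∧ p ≤ v i) := by
  constructor
  · rintro ⟨b, hne, hi, rfl⟩
    rw [show n + 3 - k = n + 1 - k + 2 by omega]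
    have hpv := hne.price_le_value_of_wins (by omega) hkn (hvpos i).le hi
    obtain ⟨hvi, hvp⟩ := hv.vIdx_lt_and_le_of_card_filter_lt_le hvpos (price_nonneg hne.1) hpv
      (hne.card_filter_price_lt_value_le hk2 hkn hi)
    exact ⟨hvi, hvp, hpv⟩
  · rintro ⟨hvi, hvp, hpi⟩
    rw [show n + 3 - k = n + 2 - k + 1 by omega] at hvi hvp
    have hi := hv.val_lt_of_vIdx_lt hvi
    have hp0 := (vIdx_nonneg (fun j => (hvpos j).le) _).trans hvp
    have hvj : ∀ j : Fin n, n + 2 - k ≤ (j : ℕ) → v j ≤ p := fun j hj =>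
      (hv.le_vIdx_of_le hj).trans hvp
    rcases eq_or_lt_of_le hkn with rfl | hkn
    · exact exists_nashEq_wins_price_first_price hn (by omega) hp0 hpi
        fun j hj => hvj j (by omega)
    · exact exists_nashEq_wins_price_of_le hk2 (by omega) hi hp0 hpi hvj
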